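/- arXiv:1909.11769 — 4 statements merged into one kernel-verified Lean document; each statement's English description precedes it below -/
import Mathlib

section
/- For X, Y positive semi-definite D×D trace-one matrices, m(X,Y)·m(Y,X) = 1 if and only if X = Y. -/
open Matrix
open scoped ComplexOrder

/-- `m(X,Y) = sup {λ : X - λY ⪰ 0}`. -/
noncomputable def mfun {D : ℕ} (X Y : Matrix (Fin D) (Fin D) ℂ) : ℝ :=
  sSup {l : ℝ | (X - l • Y).PosSemidef}

open scoped MatrixOrder

/-! Taking traces bounds every admissible `λ` by `1`, and the admissible set is closed because the
positive semidefinite cone is; so `m(X,Y) ∈ [0,1]` is attained, `m(X,Y) • Y ≤ X`. If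
`m(X,Y) m(Y,X) = 1`, both factors equal `1`, whence `Y ≤ X ≤ Y` in the Loewner order. -/

namespace Matrix

variable {𝕜 n : Type*} [RCLike 𝕜] [Fintype n]

theorem isClosed_setOf_posSemidef : IsClosed {A : Matrix n n 𝕜 | A.PosSemidef} := by
  simp only [posSemidef_iff_dotProduct_mulVec, Set.ofPred_and, Set.ofPred_forall]
  refine (isClosed_eq continuous_id.matrix_conjTranspose continuous_id).inter
    (isClosed_iInter fun x => isClosed_le continuous_const ?_)
  exact continuous_const.dotProduct (continuous_id.matrix_mulVec continuous_const)

theorem isClosed_setOf_posSemidef_sub_smul (X Y : Matrix n n 𝕜) :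
    IsClosed {l : ℝ | (X - l • Y).PosSemidef} :=
  isClosed_setOf_posSemidef.preimage (continuous_const.sub (continuous_id.smul continuous_const))

theorem le_one_of_posSemidef_sub_smul {X Y : Matrix n n 𝕜}
    (hXt : X.trace = 1) (hYt : Y.trace = 1) {l : ℝ} (hl : (X - l • Y).PosSemidef) : l ≤ 1 := by
  have h := hl.trace_nonneg
  rw [trace_sub, trace_smul, hXt, hYt, RCLike.real_smul_eq_coe_mul, mul_one,
    ← RCLike.ofReal_one, ← RCLike.ofReal_sub, RCLike.ofReal_nonneg] at h
  linarith

theorem bddAbove_setOf_posSemidef_sub_smul {X Y : Matrix n n 𝕜}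
    (hXt : X.trace = 1) (hYt : Y.trace = 1) :
    BddAbove {l : ℝ | (X - l • Y).PosSemidef} :=
  ⟨1, fun _ => le_one_of_posSemidef_sub_smul hXt hYt⟩

end Matrix

section mfun

variable {D : ℕ} {X Y : Matrix (Fin D) (Fin D) ℂ}

theorem mfun_le_one (hX : X.PosSemidef) (hXt : X.trace = 1) (hYt : Y.trace = 1) :
    mfun X Y ≤ 1 :=
  csSup_le ⟨0, by simpa using hX⟩ fun _ => le_one_of_posSemidef_sub_smul hXt hYt

theorem mfun_nonneg (hX : X.PosSemidef) (hXt : X.trace = 1) (hYt : Y.trace = 1) :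
    0 ≤ mfun X Y :=
  le_csSup (bddAbove_setOf_posSemidef_sub_smul hXt hYt) (by simpa using hX)

theorem posSemidef_sub_mfun_smul (hX : X.PosSemidef) (hXt : X.trace = 1) (hYt : Y.trace = 1) :
    (X - mfun X Y • Y).PosSemidef :=
  (isClosed_setOf_posSemidef_sub_smul X Y).csSup_mem ⟨0, by simpa using hX⟩
    (bddAbove_setOf_posSemidef_sub_smul hXt hYt)

theorem le_of_mfun_eq_one (hX : X.PosSemidef) (hXt : X.trace = 1) (hYt : Y.trace = 1)
    (h : mfun X Y = 1) : Y ≤ X :=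
  le_iff.mpr (by simpa [h] using posSemidef_sub_mfun_smul hX hXt hYt)

theorem mfun_self (hXt : X.trace = 1) : mfun X X = 1 :=
  IsGreatest.csSup_eq ⟨by simpa using PosSemidef.zero,
    fun _ => le_one_of_posSemidef_sub_smul hXt hXt⟩

end mfun

theorem stmt2 {D : ℕ} (X Y : Matrix (Fin D) (Fin D) ℂ)
    (hX : X.PosSemidef) (hY : Y.PosSemidef)
    (hXt : X.trace = 1) (hYt : Y.trace = 1) :
    mfun X Y * mfun Y X = 1 ↔ X = Y := by
  refine ⟨fun h => ?_, fun h => by rw [h, mfun_self hYt, one_mul]⟩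
  have hXY := mfun_le_one hX hXt hYt
  have hYX := mfun_le_one hY hYt hXt
  have hXY₀ := mfun_nonneg hX hXt hYt
  have hYX₀ := mfun_nonneg hY hYt hXt
  exact le_antisymm (le_of_mfun_eq_one hY hYt hXt (by nlinarith))
    (le_of_mfun_eq_one hX hXt hYt (by nlinarith))
end

section
/- Let φ be a positive linear map on D×D complex matrices such that no nonzero positive semi-definite matrix lies in the kernel of φ or of its Hilbert–Schmidt adjoint φ*. Then φ maps positive definite matrices to positive definite matrices. -/
/-!
If `x ≠ 0` and `x⋆ φ(M) x = 0`, then `tr (φ*(x x⋆) M) = 0` by adjointness. Duality makes `φ*`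
positive, and a positive semidefinite `Q` with `tr (Q M) = 0` for a positive definite `M` must
vanish (write `Q = ∑ vᵢ vᵢ⋆`, so the trace is `∑ vᵢ⋆ M vᵢ`). Hence `φ*(x x⋆) = 0`, and the
kernel condition on `φ*` forces `x x⋆ = 0`.
-/

open Matrix
open scoped ComplexOrder

namespace Matrix

variable {n : Type*} [Fintype n]

theorem trace_mul_vecMulVec {R : Type*} [CommSemiring R] (X : Matrix n n R) (v w : n → R) :
    (X * vecMulVec v w).trace = w ⬝ᵥ X *ᵥ v := by
  rw [mul_vecMulVec, trace_vecMulVec, dotProduct_comm]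

-- Over `ℂ`, unlike over `ℝ`, hermiticity comes for free from the quadratic form.
theorem posSemidef_of_dotProduct_mulVec_nonneg {A : Matrix n n ℂ}
    (h : ∀ x, 0 ≤ star x ⬝ᵥ A *ᵥ x) : A.PosSemidef := by
  classical
  rw [← isPositive_toEuclideanLin_iff, LinearMap.isPositive_iff_complex]
  intro x
  have hinner : inner ℂ (A.toEuclideanLin x) x = star x.ofLp ⬝ᵥ A *ᵥ x.ofLp := by
    rw [EuclideanSpace.inner_eq_star_dotProduct, ← (IsSelfAdjoint.of_nonneg (h x)).star_eq,
      star_dotProduct, star_star, dotProduct_comm]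
    rfl
  obtain ⟨hre, him⟩ := Complex.nonneg_iff.mp (h x)
  rw [hinner]
  exact ⟨Complex.ext rfl (by simp [← him]), hre⟩

variable {𝕜 : Type*} [RCLike 𝕜]

theorem PosSemidef.trace_mul_nonneg {A B : Matrix n n 𝕜} (hA : A.PosSemidef) (hB : B.PosSemidef) :
    0 ≤ (A * B).trace := by
  obtain ⟨m, v, rfl⟩ := posSemidef_iff_eq_sum_vecMulVec.mp hB
  simp only [Matrix.mul_sum, trace_sum, trace_mul_vecMulVec]
  exact Finset.sum_nonneg fun i _ => hA.dotProduct_mulVec_nonneg (v i)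

theorem PosSemidef.trace_mul_posDef_eq_zero_iff {Q M : Matrix n n 𝕜} (hQ : Q.PosSemidef)
    (hM : M.PosDef) : (Q * M).trace = 0 ↔ Q = 0 := by
  refine ⟨fun h => ?_, fun h => by simp [h]⟩
  obtain ⟨m, v, rfl⟩ := posSemidef_iff_eq_sum_vecMulVec.mp hQ
  rw [trace_mul_comm] at h
  simp only [Matrix.mul_sum, trace_sum, trace_mul_vecMulVec] at h
  have hterms := (Finset.sum_eq_zero_iff_of_nonneg fun i _ =>
    hM.posSemidef.dotProduct_mulVec_nonneg (v i)).mp h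
  have hv : ∀ i, v i = 0 := fun i => by
    by_contra hi
    exact (hM.dotProduct_mulVec_pos hi).ne' (hterms i (Finset.mem_univ i))
  simp [hv]

end Matrix

section AdjointPair

variable {n : Type*} [Fintype n] {φ φs : Matrix n n ℂ → Matrix n n ℂ}

theorem dotProduct_mulVec_eq_trace_of_adjoint
    (hadj : ∀ A B : Matrix n n ℂ, (Aᴴ * φ B).trace = ((φs A)ᴴ * B).trace) (M : Matrix n n ℂ)
    (x : n → ℂ) : star x ⬝ᵥ φ M *ᵥ x = ((φs (vecMulVec x (star x)))ᴴ * M).trace := by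
  rw [← hadj, (posSemidef_vecMulVec_self_star x).isHermitian.eq, trace_mul_comm,
    trace_mul_vecMulVec]

theorem posSemidef_apply_of_adjoint
    (hadj : ∀ A B : Matrix n n ℂ, (Aᴴ * φ B).trace = ((φs A)ᴴ * B).trace)
    (hpos : ∀ M : Matrix n n ℂ, M.PosSemidef → (φ M).PosSemidef) {A : Matrix n n ℂ}
    (hA : A.PosSemidef) : (φs A).PosSemidef := by
  suffices ((φs A)ᴴ).PosSemidef by simpa using this.conjTranspose
  refine posSemidef_of_dotProduct_mulVec_nonneg fun x => ?_
  rw [← trace_mul_vecMulVec, ← hadj, hA.isHermitian.eq]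
  exact hA.trace_mul_nonneg (hpos _ (posSemidef_vecMulVec_self_star x))

end AdjointPair

theorem stmt10_general {D : ℕ}
    (φ φs : Matrix (Fin D) (Fin D) ℂ →ₗ[ℂ] Matrix (Fin D) (Fin D) ℂ)
    (hadj : ∀ A B : Matrix (Fin D) (Fin D) ℂ, (Aᴴ * φ B).trace = ((φs A)ᴴ * B).trace)
    (hpos : ∀ M : Matrix (Fin D) (Fin D) ℂ, M.PosSemidef → (φ M).PosSemidef)
    (hkers : ∀ M : Matrix (Fin D) (Fin D) ℂ, M.PosSemidef → φs M = 0 → M = 0) :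
    ∀ M : Matrix (Fin D) (Fin D) ℂ, M.PosDef → (φ M).PosDef := by
  intro M hM
  have hφM := hpos M hM.posSemidef
  refine posDef_iff_dotProduct_mulVec.mpr ⟨hφM.isHermitian, fun x hx => ?_⟩
  have hP := posSemidef_vecMulVec_self_star x
  have hQ := posSemidef_apply_of_adjoint hadj hpos hP
  refine (hφM.dotProduct_mulVec_nonneg x).lt_of_ne' ?_
  rw [dotProduct_mulVec_eq_trace_of_adjoint hadj, hQ.isHermitian.eq, Ne,
    hQ.trace_mul_posDef_eq_zero_iff hM]
  exact fun h => hx (by simpa using hkers _ hP h)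

theorem stmt10 {D : ℕ}
    (φ φs : Matrix (Fin D) (Fin D) ℂ →ₗ[ℂ] Matrix (Fin D) (Fin D) ℂ)
    (hadj : ∀ A B : Matrix (Fin D) (Fin D) ℂ, (Aᴴ * φ B).trace = ((φs A)ᴴ * B).trace)
    (hpos : ∀ M : Matrix (Fin D) (Fin D) ℂ, M.PosSemidef → (φ M).PosSemidef)
    (hker : ∀ M : Matrix (Fin D) (Fin D) ℂ, M.PosSemidef → φ M = 0 → M = 0)
    (hkers : ∀ M : Matrix (Fin D) (Fin D) ℂ, M.PosSemidef → φs M = 0 → M = 0) :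
    ∀ M : Matrix (Fin D) (Fin D) ℂ, M.PosDef → (φ M).PosDef :=
  stmt10_general φ φs hadj hpos hkers
end

section
/- Under the same hypotheses, c(φ) ≤ 1, and c(φ) < 1 if and only if φ is strictly positive (i.e., maps every nonzero positive semi-definite matrix to a positive definite matrix). -/
open Matrix
open scoped ComplexOrder

/-- The projective metric `d(X,Y) = (1 - m(X,Y)m(Y,X))/(1 + m(X,Y)m(Y,X))`. -/
noncomputable def dfun {D : ℕ} (X Y : Matrix (Fin D) (Fin D) ℂ) : ℝ :=
  (1 - mfun X Y * mfun Y X) / (1 + mfun X Y * mfun Y X)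

/-- The projective action `φ·X = φ(X)/tr(φ(X))`. -/
noncomputable def projAct {D : ℕ}
    (φ : Matrix (Fin D) (Fin D) ℂ →ₗ[ℂ] Matrix (Fin D) (Fin D) ℂ)
    (X : Matrix (Fin D) (Fin D) ℂ) : Matrix (Fin D) (Fin D) ℂ :=
  ((φ X).trace)⁻¹ • φ X

/-- The contraction coefficient `c(φ) = sup {d(φ·X, φ·Y) : X, Y ∈ 𝕊_D}`. -/
noncomputable def contr {D : ℕ}
    (φ : Matrix (Fin D) (Fin D) ℂ →ₗ[ℂ] Matrix (Fin D) (Fin D) ℂ) : ℝ :=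
  sSup {r : ℝ | ∃ X Y : Matrix (Fin D) (Fin D) ℂ, X.PosSemidef ∧ X.trace = 1 ∧
    Y.PosSemidef ∧ Y.trace = 1 ∧ r = dfun (projAct φ X) (projAct φ Y)}


/-!
Every value of `d` is at most `1` because `m(X, Y) ≥ 0` whenever `X ⪰ 0`.

If `φ(M)` is singular for some nonzero `M ⪰ 0`, take a null vector `v` of `φ(M)`. Duality with
`φ*` and `ker φ* ∩ P_D = {0}` give a rank-one `P = u u*` with `v* φ(P) v > 0`; then
`m(φ·M, φ·P) = 0`, so the normalised pair `M / tr M`, `P / tr P` has `d = 1` and `c(φ) = 1`.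

If `φ` is strictly positive, `(X, x) ↦ x* (φ·X) x` is continuous and positive on the compact set
of states times the unit sphere, hence bounded below by some `δ > 0`: `φ·X ⪰ δ 1` for all states.
As a state is `⪯ 1`, also `φ·X ⪰ δ φ·Y`, so both values of `m` are `≥ δ` and
`c(φ) ≤ (1 - δ²) / (1 + δ²) < 1`.
-/
open scoped MatrixOrder

namespace Matrix

variable {n : Type*} [Fintype n]

theorem eq_zero_of_forall_star_dotProduct_mulVec_eq_zero {N : Matrix n n ℂ}
    (h : ∀ v, star v ⬝ᵥ N *ᵥ v = 0) : N = 0 := by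
  classical
  refine toEuclideanLin.injective ?_
  rw [map_zero, ← inner_map_self_eq_zero]
  intro x
  have := congrArg star (h x.ofLp)
  rw [star_dotProduct, star_star, star_zero] at this
  simpa [EuclideanSpace.inner_eq_star_dotProduct, dotProduct_comm] using this

theorem trace_vecMulVec_star_mul (v : n → ℂ) (M : Matrix n n ℂ) :
    (vecMulVec v (star v) * M).trace = star v ⬝ᵥ M *ᵥ v := by
  rw [trace_mul_comm, mul_vecMulVec, trace_vecMulVec, dotProduct_comm]

theorem trace_inv_trace_smul {X : Matrix n n ℂ} (h : X.trace ≠ 0) : (X.trace⁻¹ • X).trace = 1 := by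
  rw [trace_smul, smul_eq_mul, inv_mul_cancel₀ h]

-- For `X.trace = 0` this is `0 • X`, since `0⁻¹ = 0`.
theorem PosSemidef.inv_trace_smul {X : Matrix n n ℂ} (hX : X.PosSemidef) :
    (X.trace⁻¹ • X).PosSemidef :=
  hX.smul (inv_nonneg_of_nonneg hX.trace_nonneg)

variable [DecidableEq n]

theorem PosSemidef.le_one {X : Matrix n n ℂ} (hX : X.PosSemidef) (htr : X.trace = 1) :
    X ≤ 1 := by
  have hsum : ∑ i, hX.1.eigenvalues i = 1 := by
    simpa [htr, ← Complex.ofReal_inj] using hX.1.trace_eq_sum_eigenvalues.symm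
  rw [← map_one (algebraMap ℝ (Matrix n n ℂ))]
  refine le_algebraMap_of_spectrum_le (fun x hx => ?_) hX.1
  obtain ⟨i, rfl⟩ := hX.1.spectrum_real_eq_range_eigenvalues ▸ hx
  exact hsum ▸ Finset.single_le_sum (fun j _ => hX.eigenvalues_nonneg j) (Finset.mem_univ i)

open scoped Matrix.Norms.L2Operator in
theorem isCompact_setOf_posSemidef_trace_eq_one :
    IsCompact {X : Matrix n n ℂ | X.PosSemidef ∧ X.trace = 1} := by
  refine (isCompact_closedBall (0 : Matrix n n ℂ) ‖(1 : Matrix n n ℂ)‖).of_isClosed_subset ?_ ?_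
  · simp_rw [← nonneg_iff_posSemidef]
    exact isClosed_Ici.inter (isClosed_eq (by fun_prop) continuous_const)
  · rintro X ⟨hX, htr⟩
    rw [mem_closedBall_zero_iff]
    exact CStarAlgebra.norm_le_norm_of_nonneg_of_le hX.nonneg (hX.le_one htr)

theorem smul_one_le_of_forall_mem_sphere {A : Matrix n n ℂ} (hA : A.IsHermitian) {δ : ℝ}
    (h : ∀ x ∈ Metric.sphere (0 : EuclideanSpace ℂ n) 1, δ ≤ (star x.ofLp ⬝ᵥ A *ᵥ x.ofLp).re) :
    δ • (1 : Matrix n n ℂ) ≤ A := by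
  refine PosSemidef.of_dotProduct_mulVec_nonneg
    (hA.sub ((IsSelfAdjoint.all δ).smul isHermitian_one)) fun v => ?_
  rcases eq_or_ne v 0 with rfl | hv
  · simp
  have hvv : star v ⬝ᵥ v = (‖WithLp.toLp 2 v‖ : ℂ) ^ 2 := by
    have := inner_self_eq_norm_sq_to_K (𝕜 := ℂ) (WithLp.toLp 2 v)
    rw [EuclideanSpace.inner_eq_star_dotProduct, dotProduct_comm] at this
    exact this
  set r := ‖WithLp.toLp 2 v‖
  have hr : 0 < r := norm_pos_iff.2 (by simpa using hv)
  have hunit := h (r⁻¹ • WithLp.toLp 2 v) (by simp [norm_smul, r, hr.ne'])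
  simp only [WithLp.ofLp_smul, star_smul, mulVec_smul, smul_dotProduct, dotProduct_smul,
    Complex.real_smul, Complex.re_ofReal_mul, star_trivial] at hunit
  have hAv : star v ⬝ᵥ A *ᵥ v = ((star v ⬝ᵥ A *ᵥ v).re : ℂ) :=
    Complex.ext rfl (by simpa using hA.im_star_dotProduct_mulVec_self v)
  have key : δ * r ^ 2 ≤ (star v ⬝ᵥ A *ᵥ v).re :=
    calc δ * r ^ 2 ≤ r⁻¹ * (r⁻¹ * (star v ⬝ᵥ A *ᵥ v).re) * r ^ 2 := by gcongr
      _ = (star v ⬝ᵥ A *ᵥ v).re := by field_simp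
  rw [sub_mulVec, dotProduct_sub, smul_mulVec, one_mulVec, dotProduct_smul, hvv, hAv,
    Complex.real_smul]
  exact_mod_cast sub_nonneg.2 key

end Matrix

section Contraction

variable {D : ℕ}

theorem mfun_nonneg_s15 {A : Matrix (Fin D) (Fin D) ℂ} (B : Matrix (Fin D) (Fin D) ℂ)
    (hA : A.PosSemidef) : 0 ≤ mfun A B := by
  by_cases h : BddAbove {l : ℝ | (A - l • B).PosSemidef}
  · exact le_csSup h (by simpa using hA)
  · exact (Real.sSup_of_not_bddAbove h).ge

theorem le_mfun {A B : Matrix (Fin D) (Fin D) ℂ} (hB : 0 < B.trace.re) {l : ℝ}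
    (hl : l • B ≤ A) : l ≤ mfun A B := by
  refine le_csSup ⟨A.trace.re / B.trace.re, fun l' hl' => ?_⟩ hl
  rw [le_div_iff₀ hB]
  have := (Complex.nonneg_iff.1 (PosSemidef.trace_nonneg hl')).1
  simpa [trace_sub, trace_smul] using this

theorem mfun_eq_zero_of_dotProduct_mulVec {A B : Matrix (Fin D) (Fin D) ℂ} (hA : A.PosSemidef)
    {v : Fin D → ℂ} (hAv : star v ⬝ᵥ A *ᵥ v = 0) (hBv : 0 < star v ⬝ᵥ B *ᵥ v) : mfun A B = 0 := by
  refine IsGreatest.csSup_eq ⟨by simpa using hA, fun l hl => ?_⟩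
  have := hl.dotProduct_mulVec_nonneg v
  rw [sub_mulVec, dotProduct_sub, hAv, smul_mulVec, dotProduct_smul, zero_sub, neg_nonneg,
    Complex.real_smul] at this
  by_contra! hl0
  exact (mul_pos (Complex.zero_lt_real.2 hl0) hBv).not_ge this

theorem dfun_le_one {A B : Matrix (Fin D) (Fin D) ℂ} (hA : A.PosSemidef) (hB : B.PosSemidef) :
    dfun A B ≤ 1 := by
  have := mul_nonneg (mfun_nonneg_s15 B hA) (mfun_nonneg_s15 A hB)
  rw [dfun, div_le_one (by linarith)]
  linarith

theorem dfun_le_of_le_mfun {A B : Matrix (Fin D) (Fin D) ℂ} {δ : ℝ} (hδ : 0 ≤ δ)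
    (hAB : δ ≤ mfun A B) (hBA : δ ≤ mfun B A) :
    dfun A B ≤ (1 - δ ^ 2) / (1 + δ ^ 2) := by
  have : δ ^ 2 ≤ mfun A B * mfun B A := by
    rw [sq]; exact mul_le_mul hAB hBA hδ (hδ.trans hAB)
  rw [dfun, div_le_div_iff₀ (by nlinarith) (by positivity)]
  nlinarith

variable (φ : Matrix (Fin D) (Fin D) ℂ →ₗ[ℂ] Matrix (Fin D) (Fin D) ℂ)

theorem projAct_smul {c : ℂ} (hc : c ≠ 0) (X : Matrix (Fin D) (Fin D) ℂ) :
    projAct φ (c • X) = projAct φ X := by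
  simp only [projAct, map_smul, trace_smul, smul_smul, smul_eq_mul, _root_.mul_inv_rev,
    inv_mul_cancel_right₀ hc]

theorem continuousOn_projAct : ContinuousOn (projAct φ) {X | (φ X).trace ≠ 0} := by
  have hφ : Continuous φ := φ.continuous_of_finiteDimensional
  exact (hφ.matrix_trace.continuousOn.inv₀ fun X hX => hX).smul hφ.continuousOn

theorem dfun_projAct_le_one (hpos : ∀ M : Matrix (Fin D) (Fin D) ℂ, M.PosSemidef → (φ M).PosSemidef)
    {X Y : Matrix (Fin D) (Fin D) ℂ} (hX : X.PosSemidef) (hY : Y.PosSemidef) :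
    dfun (projAct φ X) (projAct φ Y) ≤ 1 :=
  dfun_le_one (hpos X hX).inv_trace_smul (hpos Y hY).inv_trace_smul

theorem contr_le_one (hpos : ∀ M : Matrix (Fin D) (Fin D) ℂ, M.PosSemidef → (φ M).PosSemidef) :
    contr φ ≤ 1 :=
  Real.sSup_le (by rintro _ ⟨X, Y, hX, -, hY, -, rfl⟩; exact dfun_projAct_le_one φ hpos hX hY)
    zero_le_one

theorem exists_star_dotProduct_map_vecMulVec_ne_zero
    (φs : Matrix (Fin D) (Fin D) ℂ →ₗ[ℂ] Matrix (Fin D) (Fin D) ℂ)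
    (hadj : ∀ A B : Matrix (Fin D) (Fin D) ℂ, (Aᴴ * φ B).trace = ((φs A)ᴴ * B).trace)
    (hkers : ∀ M : Matrix (Fin D) (Fin D) ℂ, M.PosSemidef → φs M = 0 → M = 0)
    {v : Fin D → ℂ} (hv : v ≠ 0) :
    ∃ u, star v ⬝ᵥ φ (vecMulVec u (star u)) *ᵥ v ≠ 0 := by
  by_contra! h
  have hφs : φs (vecMulVec v (star v)) = 0 := by
    rw [← conjTranspose_eq_zero]
    refine eq_zero_of_forall_star_dotProduct_mulVec_eq_zero fun u => ?_
    rw [← trace_vecMulVec_star_mul, trace_mul_comm, ← hadj,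
      (posSemidef_vecMulVec_self_star v).1.eq, trace_vecMulVec_star_mul, h]
  have := congrArg trace (hkers _ (posSemidef_vecMulVec_self_star v) hφs)
  rw [trace_vecMulVec, trace_zero, dotProduct_comm] at this
  exact hv (dotProduct_star_self_eq_zero.1 this)

theorem one_le_contr_of_not_posDef (φs : Matrix (Fin D) (Fin D) ℂ →ₗ[ℂ] Matrix (Fin D) (Fin D) ℂ)
    (hadj : ∀ A B : Matrix (Fin D) (Fin D) ℂ, (Aᴴ * φ B).trace = ((φs A)ᴴ * B).trace)
    (hpos : ∀ M : Matrix (Fin D) (Fin D) ℂ, M.PosSemidef → (φ M).PosSemidef)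
    (hkers : ∀ M : Matrix (Fin D) (Fin D) ℂ, M.PosSemidef → φs M = 0 → M = 0)
    {M : Matrix (Fin D) (Fin D) ℂ} (hM : M.PosSemidef) (hM0 : M ≠ 0) (hφM : ¬(φ M).PosDef) :
    1 ≤ contr φ := by
  obtain ⟨v, hv0, hφMv⟩ : ∃ v ≠ 0, star v ⬝ᵥ φ M *ᵥ v = 0 := by
    rw [posDef_iff_dotProduct_mulVec] at hφM
    push Not at hφM
    obtain ⟨v, hv0, hv⟩ := hφM (hpos M hM).1
    exact ⟨v, hv0, (((hpos M hM).dotProduct_mulVec_nonneg v).lt_or_eq.resolve_left hv).symm⟩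
  obtain ⟨u, hu⟩ := exists_star_dotProduct_map_vecMulVec_ne_zero φ φs hadj hkers hv0
  set P := vecMulVec u (star u)
  have hP : P.PosSemidef := posSemidef_vecMulVec_self_star u
  have hP0 : P ≠ 0 := fun h => hu (by simp [h])
  have hφPv : 0 < star v ⬝ᵥ φ P *ᵥ v := ((hpos P hP).dotProduct_mulVec_nonneg v).lt_of_ne' hu
  have htrφP : 0 < (φ P).trace := (hpos P hP).trace_nonneg.lt_of_ne' fun h => hu (by
    simp [(hpos P hP).trace_eq_zero_iff.1 h])
  have hm : mfun (projAct φ M) (projAct φ P) = 0 := by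
    refine mfun_eq_zero_of_dotProduct_mulVec (hpos M hM).inv_trace_smul (v := v) ?_ ?_
    · rw [projAct, smul_mulVec, dotProduct_smul, hφMv, smul_zero]
    · rw [projAct, smul_mulVec, dotProduct_smul, smul_eq_mul]
      exact mul_pos (inv_pos.2 htrφP) hφPv
  have htrM : M.trace ≠ 0 := fun h => hM0 (hM.trace_eq_zero_iff.1 h)
  have htrP : P.trace ≠ 0 := fun h => hP0 (hP.trace_eq_zero_iff.1 h)
  refine le_csSup ⟨1, ?_⟩ ⟨M.trace⁻¹ • M, P.trace⁻¹ • P, hM.inv_trace_smul,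
    trace_inv_trace_smul htrM, hP.inv_trace_smul, trace_inv_trace_smul htrP, ?_⟩
  · rintro _ ⟨X, Y, hX, -, hY, -, rfl⟩
    exact dfun_projAct_le_one φ hpos hX hY
  · rw [projAct_smul φ (inv_ne_zero htrM), projAct_smul φ (inv_ne_zero htrP), dfun, hm]
    norm_num

def StrictlyPositive : Prop :=
  ∀ M : Matrix (Fin D) (Fin D) ℂ, M.PosSemidef → M ≠ 0 → (φ M).PosDef

variable {φ}

theorem StrictlyPositive.trace_pos (hφ : StrictlyPositive φ) {X : Matrix (Fin D) (Fin D) ℂ}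
    (hX : X.PosSemidef) (hX1 : X.trace = 1) : 0 < (φ X).trace := by
  have : Nonempty (Fin D) :=
    Fin.pos_iff_nonempty.1 (Nat.pos_of_ne_zero (by rintro rfl; simp at hX1))
  exact (hφ X hX (by rintro rfl; simp at hX1)).trace_pos

theorem StrictlyPositive.trace_projAct (hφ : StrictlyPositive φ) {X : Matrix (Fin D) (Fin D) ℂ}
    (hX : X.PosSemidef) (hX1 : X.trace = 1) : (projAct φ X).trace = 1 :=
  trace_inv_trace_smul (hφ.trace_pos hX hX1).ne'

theorem StrictlyPositive.posDef_projAct (hφ : StrictlyPositive φ) {X : Matrix (Fin D) (Fin D) ℂ}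
    (hX : X.PosSemidef) (hX1 : X.trace = 1) : (projAct φ X).PosDef :=
  (hφ X hX (by rintro rfl; simp at hX1)).smul (inv_pos.2 (hφ.trace_pos hX hX1))

theorem StrictlyPositive.exists_pos_smul_one_le_projAct (hφ : StrictlyPositive φ) :
    ∃ δ : ℝ, 0 < δ ∧ ∀ X : Matrix (Fin D) (Fin D) ℂ, X.PosSemidef → X.trace = 1 →
      δ • (1 : Matrix (Fin D) (Fin D) ℂ) ≤ projAct φ X := by
  set S := {X : Matrix (Fin D) (Fin D) ℂ | X.PosSemidef ∧ X.trace = 1}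
  have hcont : ContinuousOn
      (fun p : Matrix (Fin D) (Fin D) ℂ × EuclideanSpace ℂ (Fin D) =>
        (star p.2.ofLp ⬝ᵥ projAct φ p.1 *ᵥ p.2.ofLp).re) (S ×ˢ Metric.sphere 0 1) := by
    have hproj : ContinuousOn (projAct φ) S :=
      (continuousOn_projAct φ).mono fun X hX => (hφ.trace_pos hX.1 hX.2).ne'
    have hq : Continuous fun p : Matrix (Fin D) (Fin D) ℂ × EuclideanSpace ℂ (Fin D) =>
        (star p.2.ofLp ⬝ᵥ p.1 *ᵥ p.2.ofLp).re := by fun_prop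
    have h1 : ContinuousOn
        (fun p : Matrix (Fin D) (Fin D) ℂ × EuclideanSpace ℂ (Fin D) => projAct φ p.1)
        (S ×ˢ Metric.sphere 0 1) :=
      hproj.comp continuousOn_fst fun p hp => hp.1
    exact (hq.comp_continuousOn (h1.prodMk continuousOn_snd) :)
  have hf_pos : ∀ p ∈ S ×ˢ Metric.sphere (0 : EuclideanSpace ℂ (Fin D)) 1,
      0 < (star p.2.ofLp ⬝ᵥ projAct φ p.1 *ᵥ p.2.ofLp).re := by
    rintro ⟨X, x⟩ ⟨⟨hX, hX1⟩, hx⟩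
    refine (hφ.posDef_projAct hX hX1).re_dotProduct_pos fun h => ?_
    rw [(WithLp.ofLp_eq_zero 2).1 h, mem_sphere_zero_iff_norm, norm_zero] at hx
    exact zero_ne_one hx
  obtain ⟨δ, hδ, hle⟩ := (isCompact_setOf_posSemidef_trace_eq_one.prod
    (isCompact_sphere _ _)).exists_forall_le' hcont hf_pos
  exact ⟨δ, hδ, fun X hX hX1 => smul_one_le_of_forall_mem_sphere
    (hφ.posDef_projAct hX hX1).1 fun x hx => hle (X, x) ⟨⟨hX, hX1⟩, hx⟩⟩

theorem StrictlyPositive.contr_lt_one (hφ : StrictlyPositive φ) : contr φ < 1 := by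
  obtain ⟨δ, hδ, hle⟩ := hφ.exists_pos_smul_one_le_projAct
  have hmem : ∀ X Y : Matrix (Fin D) (Fin D) ℂ, X.PosSemidef → X.trace = 1 → Y.PosSemidef →
      Y.trace = 1 → δ ≤ mfun (projAct φ X) (projAct φ Y) := by
    intro X Y hX hX1 hY hY1
    refine le_mfun (by simp [hφ.trace_projAct hY hY1]) ?_
    calc δ • projAct φ Y
        ≤ δ • 1 := smul_le_smul_of_nonneg_left
          ((hφ.posDef_projAct hY hY1).posSemidef.le_one (hφ.trace_projAct hY hY1)) hδ.le
      _ ≤ projAct φ X := hle X hX hX1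
  refine (Real.sSup_le (a := max ((1 - δ ^ 2) / (1 + δ ^ 2)) 0) ?_ (le_max_right _ _)).trans_lt
    (max_lt ?_ one_pos)
  · rintro _ ⟨X, Y, hX, hX1, hY, hY1, rfl⟩
    exact (dfun_le_of_le_mfun hδ.le (hmem X Y hX hX1 hY hY1) (hmem Y X hY hY1 hX hX1)).trans
      (le_max_left _ _)
  · rw [div_lt_one (by positivity)]
    nlinarith

end Contraction

theorem stmt15_general {D : ℕ}
    (φ φs : Matrix (Fin D) (Fin D) ℂ →ₗ[ℂ] Matrix (Fin D) (Fin D) ℂ)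
    (hadj : ∀ A B : Matrix (Fin D) (Fin D) ℂ, (Aᴴ * φ B).trace = ((φs A)ᴴ * B).trace)
    (hpos : ∀ M : Matrix (Fin D) (Fin D) ℂ, M.PosSemidef → (φ M).PosSemidef)
    (hkers : ∀ M : Matrix (Fin D) (Fin D) ℂ, M.PosSemidef → φs M = 0 → M = 0) :
    contr φ ≤ 1 ∧
      (contr φ < 1 ↔ ∀ M : Matrix (Fin D) (Fin D) ℂ, M.PosSemidef → M ≠ 0 → (φ M).PosDef) :=
  ⟨contr_le_one φ hpos,
    fun hlt _ hM hM0 => by_contra fun hφM =>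
      (one_le_contr_of_not_posDef φ φs hadj hpos hkers hM hM0 hφM).not_gt hlt,
    StrictlyPositive.contr_lt_one (φ := φ)⟩

theorem stmt15 {D : ℕ}
    (φ φs : Matrix (Fin D) (Fin D) ℂ →ₗ[ℂ] Matrix (Fin D) (Fin D) ℂ)
    (hadj : ∀ A B : Matrix (Fin D) (Fin D) ℂ, (Aᴴ * φ B).trace = ((φs A)ᴴ * B).trace)
    (hpos : ∀ M : Matrix (Fin D) (Fin D) ℂ, M.PosSemidef → (φ M).PosSemidef)
    (hker : ∀ M : Matrix (Fin D) (Fin D) ℂ, M.PosSemidef → φ M = 0 → M = 0)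
    (hkers : ∀ M : Matrix (Fin D) (Fin D) ℂ, M.PosSemidef → φs M = 0 → M = 0) :
    contr φ ≤ 1 ∧
      (contr φ < 1 ↔ ∀ M : Matrix (Fin D) (Fin D) ℂ, M.PosSemidef → M ≠ 0 → (φ M).PosDef) :=
  stmt15_general φ φs hadj hpos hkers
end

section
/- For two positive linear maps φ, φ' on D×D matrices, each with trivial kernel on the positive cone for both the map and its adjoint, the contraction coefficients satisfy c(φ∘φ') ≤ c(φ)·c(φ'). -/
open Matrix
open scoped ComplexOrder

/-!
Since `d` only depends on the rays through its arguments, the normalisation in `φ·X` can be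
dropped. For `a = m(ρ,σ)`, `b = m(σ,ρ)` the matrices `u = ρ - aσ`, `v = σ - bρ` are positive and
`(1 - ab)ρ = u + av`, `(1 - ab)σ = bu + v`. If `α = m(φu,φv)`, `β = m(φv,φu)`, then
`φρ ⪰ (α + a)/(bα + 1) · φσ` and `φσ ⪰ (β + b)/(aβ + 1) · φρ`, whence
`m(φρ,φσ) m(φσ,φρ) ≥ (ab + αβ)/(1 + ab·αβ)`. Under `p ↦ (1 - p)/(1 + p)` this tanh-type sum
becomes a product, so `d(φρ,φσ) ≤ d(φu,φv) d(ρ,σ) ≤ c(φ) d(ρ,σ)`; applied to `φ'X, φ'Y` this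
gives `c(φ∘φ') ≤ c(φ) c(φ')`.
-/

open scoped MatrixOrder Pointwise

section OrderedModule

variable {E : Type*} [AddCommGroup E] [PartialOrder E] [IsOrderedAddMonoid E] [Module ℝ E]
  [PosSMulMono ℝ E]

theorem div_smul_add_le_add_smul {U V : E} {a b α : ℝ} (hb : 0 ≤ b) (hα : 0 ≤ α)
    (hab : a * b ≤ 1) (h : α • V ≤ U) :
    ((α + a) / (b * α + 1)) • (b • U + V) ≤ U + a • V := by
  have hden : 0 < b * α + 1 := by positivity
  have hdiff : U + a • V - ((α + a) / (b * α + 1)) • (b • U + V)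
      = ((1 - a * b) / (b * α + 1)) • (U - α • V) := by
    match_scalars <;> field_simp <;> ring
  rw [← sub_nonneg, hdiff]
  exact smul_nonneg (div_nonneg (by linarith) hden.le) (sub_nonneg.mpr h)

end OrderedModule

theorem add_div_one_add_mul_le_mul {a b α β : ℝ} (ha : 0 ≤ a) (hb : 0 ≤ b) (hα : 0 ≤ α)
    (hβ : 0 ≤ β) (hab : a * b ≤ 1) (hαβ : α * β ≤ 1) :
    (a * b + α * β) / (1 + a * b * (α * β))
      ≤ (α + a) / (b * α + 1) * ((β + b) / (a * β + 1)) := by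
  rw [div_mul_div_comm, div_le_div_iff₀ (by positivity) (by positivity)]
  have hdiff : (α + a) * (β + b) * (1 + a * b * (α * β))
      - (a * b + α * β) * ((b * α + 1) * (a * β + 1))
      = (b * α + a * β) * (1 - a * b) * (1 - α * β) := by ring
  have : 0 ≤ (b * α + a * β) * (1 - a * b) * (1 - α * β) := by
    apply mul_nonneg (mul_nonneg _ _) <;> nlinarith
  linarith

theorem one_sub_div_one_add_le_mul {p s t : ℝ} (hs : 0 ≤ s) (ht : 0 ≤ t)
    (h : (s + t) / (1 + s * t) ≤ p) :
    (1 - p) / (1 + p) ≤ (1 - s) / (1 + s) * ((1 - t) / (1 + t)) := by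
  have hst : 0 < 1 + s * t := by positivity
  have hp : 0 ≤ p := le_trans (by positivity) h
  rw [div_le_iff₀ hst] at h
  rw [div_mul_div_comm, div_le_div_iff₀ (by positivity) (by positivity)]
  nlinarith

section Mfun

variable {D : ℕ} {X Y : Matrix (Fin D) (Fin D) ℂ}

theorem Matrix.PosSemidef.re_trace_pos (hX : X.PosSemidef) (hX0 : X ≠ 0) : 0 < X.trace.re :=
  (Complex.pos_iff.mp (hX.trace_nonneg.lt_of_ne (Ne.symm ((hX.trace_eq_zero_iff).not.mpr hX0)))).1

theorem Matrix.PosSemidef.trace_inv_smul (hX : X.PosSemidef) :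
    X.trace⁻¹ • X = X.trace.re⁻¹ • X := by
  have h : X.trace = (X.trace.re : ℂ) :=
    Complex.eq_re_of_ofReal_le (by rw [Complex.ofReal_zero]; exact hX.trace_nonneg)
  conv_lhs => rw [h, ← Complex.ofReal_inv, Complex.coe_smul]

theorem Matrix.PosSemidef.trace_re_inv_smul (hX : X.PosSemidef) (hX0 : X ≠ 0) :
    (X.trace.re⁻¹ • X).trace = 1 := by
  rw [← hX.trace_inv_smul, trace_smul, smul_eq_mul,
    inv_mul_cancel₀ (hX.trace_eq_zero_iff.not.mpr hX0)]

theorem mul_re_trace_le_of_smul_le {l : ℝ} (h : l • Y ≤ X) : l * Y.trace.re ≤ X.trace.re := by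
  have := (Complex.nonneg_iff.mp (sub_nonneg.mpr h).posSemidef.trace_nonneg).1
  simp only [trace_sub, trace_smul, Complex.sub_re, Complex.real_smul, Complex.re_ofReal_mul]
    at this
  linarith

theorem bddAbove_setOf_smul_le (hY : Y.PosSemidef) (hY0 : Y ≠ 0) :
    BddAbove {l : ℝ | l • Y ≤ X} :=
  ⟨X.trace.re / Y.trace.re, fun _ hl =>
    (le_div_iff₀ (hY.re_trace_pos hY0)).mpr (mul_re_trace_le_of_smul_le hl)⟩

theorem isClosed_setOf_smul_le (hX : X.IsHermitian) (hY : Y.IsHermitian) :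
    IsClosed {l : ℝ | l • Y ≤ X} := by
  have hset : {l : ℝ | l • Y ≤ X}
      = ⋂ x : Fin D → ℂ, {l : ℝ | (l : ℂ) * (star x ⬝ᵥ Y *ᵥ x) ≤ star x ⬝ᵥ X *ᵥ x} := by
    ext l
    simp only [Set.mem_ofPred_eq, Set.mem_iInter, le_iff, posSemidef_iff_dotProduct_mulVec,
      hX.sub (hY.smul (IsSelfAdjoint.all l)), true_and, sub_mulVec, dotProduct_sub, sub_nonneg]
    simp [smul_mulVec, dotProduct_smul, Complex.real_smul]
  rw [hset]
  exact isClosed_iInter fun x => isClosed_le (by fun_prop) continuous_const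

theorem le_mfun_s16 (hY : Y.PosSemidef) (hY0 : Y ≠ 0) {l : ℝ} (h : l • Y ≤ X) : l ≤ mfun X Y :=
  le_csSup (bddAbove_setOf_smul_le hY hY0) h

theorem mfun_nonneg_s16 (hX : X.PosSemidef) (hY : Y.PosSemidef) (hY0 : Y ≠ 0) : 0 ≤ mfun X Y :=
  le_mfun_s16 hY hY0 (by simpa using hX.nonneg)

theorem mfun_smul_le (hX : X.PosSemidef) (hY : Y.PosSemidef) (hY0 : Y ≠ 0) :
    mfun X Y • Y ≤ X :=
  (isClosed_setOf_smul_le hX.1 hY.1).csSup_mem ⟨0, by simpa using hX.nonneg⟩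
    (bddAbove_setOf_smul_le hY hY0)

theorem mfun_mul_mfun_le_one (hX : X.PosSemidef) (hX0 : X ≠ 0) (hY : Y.PosSemidef)
    (hY0 : Y ≠ 0) : mfun X Y * mfun Y X ≤ 1 := by
  have hXY := mul_re_trace_le_of_smul_le (mfun_smul_le hX hY hY0)
  have hYX := mul_re_trace_le_of_smul_le (mfun_smul_le hY hX hX0)
  have hm := mfun_nonneg_s16 hY hX hX0
  have htY := hY.re_trace_pos hY0
  nlinarith [mul_le_mul_of_nonneg_left hXY hm]

theorem mfun_mul_mfun_lt_one (hX : X.PosSemidef) (hX0 : X ≠ 0) (hY : Y.PosSemidef)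
    (hY0 : Y ≠ 0) (h : X - mfun X Y • Y ≠ 0) : mfun X Y * mfun Y X < 1 := by
  set a := mfun X Y
  set b := mfun Y X
  have hu : (X - a • Y).PosSemidef := (sub_nonneg.mpr (mfun_smul_le hX hY hY0)).posSemidef
  have hv : (Y - b • X).PosSemidef := (sub_nonneg.mpr (mfun_smul_le hY hX hX0)).posSemidef
  have hX' : (1 - a * b) • X = (X - a • Y) + a • (Y - b • X) := by module
  have htr := congrArg (fun M => M.trace.re) hX'
  simp only [trace_smul, trace_add, Complex.real_smul, Complex.add_re, Complex.re_ofReal_mul]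
    at htr
  have hpos : 0 < (1 - a * b) * X.trace.re := by
    rw [htr]
    linarith [hu.re_trace_pos h,
      mul_nonneg (mfun_nonneg_s16 hX hY hY0) (Complex.nonneg_iff.mp hv.trace_nonneg).1]
  linarith [pos_of_mul_pos_left hpos (hX.re_trace_pos hX0).le]

theorem mfun_self_s16 (hX : X.PosSemidef) (hX0 : X ≠ 0) : mfun X X = 1 := by
  have h1 : 1 ≤ mfun X X := le_mfun_s16 hX hX0 (by rw [one_smul])
  nlinarith [mfun_mul_mfun_le_one hX hX0 hX hX0]

theorem mfun_smul_smul {s t : ℝ} (hs : 0 < s) (ht : 0 < t) :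
    mfun (s • X) (t • Y) = s / t * mfun X Y := by
  have hset : {l : ℝ | l • t • Y ≤ s • X} = (s / t) • {l : ℝ | l • Y ≤ X} := by
    ext l
    have hl : l • t • Y = s • (((s / t)⁻¹ • l) • Y) := by
      rw [smul_smul, smul_smul, smul_eq_mul]
      congr 1
      field_simp
    rw [Set.mem_smul_set_iff_inv_smul_mem₀ (by positivity), Set.mem_ofPred_eq, Set.mem_ofPred_eq,
      hl, smul_le_smul_iff_of_pos_left hs]
  change sSup {l : ℝ | l • t • Y ≤ s • X} = s / t * sSup {l : ℝ | l • Y ≤ X}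
  rw [hset, Real.sSup_smul_of_nonneg (by positivity), smul_eq_mul]

theorem dfun_smul_smul {s t : ℝ} (hs : 0 < s) (ht : 0 < t) : dfun (s • X) (t • Y) = dfun X Y := by
  have hst : s / t * (t / s) = 1 := by field_simp
  rw [dfun, dfun, mfun_smul_smul hs ht, mfun_smul_smul ht hs,
    mul_mul_mul_comm, hst, one_mul]

theorem dfun_comm : dfun X Y = dfun Y X := by
  rw [dfun, dfun, mul_comm (mfun X Y)]

theorem dfun_smul_self (hX : X.PosSemidef) (hX0 : X ≠ 0) {a : ℝ} (ha : 0 < a) :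
    dfun (a • X) X = 0 := by
  have h := dfun_smul_smul (X := X) (Y := X) ha one_pos
  rw [one_smul] at h
  rw [h, dfun, mfun_self_s16 hX hX0]
  norm_num

theorem dfun_nonneg (hX : X.PosSemidef) (hX0 : X ≠ 0) (hY : Y.PosSemidef) (hY0 : Y ≠ 0) :
    0 ≤ dfun X Y :=
  div_nonneg (by linarith [mfun_mul_mfun_le_one hX hX0 hY hY0])
    (by nlinarith [mfun_nonneg_s16 hX hY hY0, mfun_nonneg_s16 hY hX hX0])

theorem dfun_le_one_s16 (hX : X.PosSemidef) (hX0 : X ≠ 0) (hY : Y.PosSemidef) (hY0 : Y ≠ 0) :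
    dfun X Y ≤ 1 := by
  have hp := mul_nonneg (mfun_nonneg_s16 hX hY hY0) (mfun_nonneg_s16 hY hX hX0)
  rw [dfun, div_le_one (by linarith)]
  linarith

theorem le_mfun_add_smul_mul_mfun {U V : Matrix (Fin D) (Fin D) ℂ} (hU : U.PosSemidef)
    (hU0 : U ≠ 0) (hV : V.PosSemidef) (hV0 : V ≠ 0) {a b : ℝ} (ha : 0 ≤ a) (hb : 0 ≤ b)
    (hab : a * b ≤ 1) :
    (a * b + mfun U V * mfun V U) / (1 + a * b * (mfun U V * mfun V U))
      ≤ mfun (U + a • V) (b • U + V) * mfun (b • U + V) (U + a • V) := by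
  have hP : (U + a • V).PosSemidef := hU.add (hV.smul ha)
  have hQ : (b • U + V).PosSemidef := (hU.smul hb).add hV
  have hP0 : U + a • V ≠ 0 := fun h =>
    hU0 (le_antisymm (h ▸ le_add_of_nonneg_right (hV.smul ha).nonneg) hU.nonneg)
  have hQ0 : b • U + V ≠ 0 := fun h =>
    hV0 (le_antisymm (h ▸ le_add_of_nonneg_left (hU.smul hb).nonneg) hV.nonneg)
  have hα := mfun_nonneg_s16 hU hV hV0
  have hβ := mfun_nonneg_s16 hV hU hU0
  have hPQ := le_mfun_s16 hQ hQ0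
    (div_smul_add_le_add_smul hb hα hab (mfun_smul_le hU hV hV0))
  have hQP := div_smul_add_le_add_smul ha hβ (by rwa [mul_comm]) (mfun_smul_le hV hU hU0)
  rw [add_comm (a • V), add_comm V] at hQP
  replace hQP := le_mfun_s16 hP hP0 hQP
  calc _ ≤ _ := add_div_one_add_mul_le_mul ha hb hα hβ hab (mfun_mul_mfun_le_one hU hU0 hV hV0)
    _ ≤ _ := mul_le_mul hPQ hQP (by positivity) (mfun_nonneg_s16 hP hQ hQ0)

end Mfun

section Contraction

variable {D : ℕ} (φ : Matrix (Fin D) (Fin D) ℂ →ₗ[ℂ] Matrix (Fin D) (Fin D) ℂ)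

theorem dfun_projAct {X Y : Matrix (Fin D) (Fin D) ℂ} (hX : (φ X).PosSemidef) (hX0 : φ X ≠ 0)
    (hY : (φ Y).PosSemidef) (hY0 : φ Y ≠ 0) :
    dfun (projAct φ X) (projAct φ Y) = dfun (φ X) (φ Y) := by
  rw [projAct, projAct, hX.trace_inv_smul, hY.trace_inv_smul,
    dfun_smul_smul (inv_pos.mpr (hX.re_trace_pos hX0)) (inv_pos.mpr (hY.re_trace_pos hY0))]

theorem dfun_apply_le_contr
    (hpos : ∀ M : Matrix (Fin D) (Fin D) ℂ, M.PosSemidef → (φ M).PosSemidef)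
    (hker : ∀ M : Matrix (Fin D) (Fin D) ℂ, M.PosSemidef → φ M = 0 → M = 0)
    {U V : Matrix (Fin D) (Fin D) ℂ} (hU : U.PosSemidef)
    (hU0 : U ≠ 0) (hV : V.PosSemidef) (hV0 : V ≠ 0) : dfun (φ U) (φ V) ≤ contr φ := by
  have hφ0 : ∀ {M}, M.PosSemidef → M.trace = 1 → φ M ≠ 0 := fun hM ht h0 => by
    simp [hker _ hM h0] at ht
  have hbdd : BddAbove {r : ℝ | ∃ X Y : Matrix (Fin D) (Fin D) ℂ, X.PosSemidef ∧
      X.trace = 1 ∧ Y.PosSemidef ∧ Y.trace = 1 ∧ r = dfun (projAct φ X) (projAct φ Y)} := by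
    refine ⟨1, ?_⟩
    rintro _ ⟨X, Y, hX, hXt, hY, hYt, rfl⟩
    rw [dfun_projAct φ (hpos X hX) (hφ0 hX hXt) (hpos Y hY) (hφ0 hY hYt)]
    exact dfun_le_one_s16 (hpos X hX) (hφ0 hX hXt) (hpos Y hY) (hφ0 hY hYt)
  set X := U.trace.re⁻¹ • U
  set Y := V.trace.re⁻¹ • V
  have hX : X.PosSemidef := hU.smul (inv_nonneg.mpr (hU.re_trace_pos hU0).le)
  have hY : Y.PosSemidef := hV.smul (inv_nonneg.mpr (hV.re_trace_pos hV0).le)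
  have hXt : X.trace = 1 := hU.trace_re_inv_smul hU0
  have hYt : Y.trace = 1 := hV.trace_re_inv_smul hV0
  have hXY : dfun (φ U) (φ V) = dfun (projAct φ X) (projAct φ Y) := by
    rw [dfun_projAct φ (hpos X hX) (hφ0 hX hXt) (hpos Y hY) (hφ0 hY hYt),
      LinearMap.map_smul_of_tower, LinearMap.map_smul_of_tower,
      dfun_smul_smul (inv_pos.mpr (hU.re_trace_pos hU0)) (inv_pos.mpr (hV.re_trace_pos hV0))]
  rw [hXY]
  exact le_csSup hbdd ⟨X, Y, hX, hXt, hY, hYt, rfl⟩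

theorem contr_nonneg
    (hpos : ∀ M : Matrix (Fin D) (Fin D) ℂ, M.PosSemidef → (φ M).PosSemidef)
    (hker : ∀ M : Matrix (Fin D) (Fin D) ℂ, M.PosSemidef → φ M = 0 → M = 0) :
    0 ≤ contr φ := by
  refine Real.sSup_nonneg ?_
  rintro _ ⟨X, Y, hX, hXt, hY, hYt, rfl⟩
  have hX0 : φ X ≠ 0 := fun h => by simp [hker X hX h] at hXt
  have hY0 : φ Y ≠ 0 := fun h => by simp [hker Y hY h] at hYt
  rw [dfun_projAct φ (hpos X hX) hX0 (hpos Y hY) hY0]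
  exact dfun_nonneg (hpos X hX) hX0 (hpos Y hY) hY0

theorem dfun_apply_le_contr_mul
    (hpos : ∀ M : Matrix (Fin D) (Fin D) ℂ, M.PosSemidef → (φ M).PosSemidef)
    (hker : ∀ M : Matrix (Fin D) (Fin D) ℂ, M.PosSemidef → φ M = 0 → M = 0)
    {ρ σ : Matrix (Fin D) (Fin D) ℂ} (hρ : ρ.PosSemidef) (hρ0 : ρ ≠ 0) (hσ : σ.PosSemidef)
    (hσ0 : σ ≠ 0) : dfun (φ ρ) (φ σ) ≤ contr φ * dfun ρ σ := by
  set a := mfun ρ σ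
  set b := mfun σ ρ
  have ha : 0 ≤ a := mfun_nonneg_s16 hρ hσ hσ0
  have hb : 0 ≤ b := mfun_nonneg_s16 hσ hρ hρ0
  have hφρ0 : φ ρ ≠ 0 := fun h => hρ0 (hker ρ hρ h)
  have hφσ0 : φ σ ≠ 0 := fun h => hσ0 (hker σ hσ h)
  have hu : (ρ - a • σ).PosSemidef := (sub_nonneg.mpr (mfun_smul_le hρ hσ hσ0)).posSemidef
  have hv : (σ - b • ρ).PosSemidef := (sub_nonneg.mpr (mfun_smul_le hσ hρ hρ0)).posSemidef
  by_cases hu0 : ρ - a • σ = 0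
  · have hρa : ρ = a • σ := sub_eq_zero.mp hu0
    have ha0 : 0 < a := ha.lt_of_ne fun h => hρ0 (by rw [hρa, ← h, zero_smul])
    rw [hρa, LinearMap.map_smul_of_tower, dfun_smul_self (hpos σ hσ) hφσ0 ha0,
      dfun_smul_self hσ hσ0 ha0, mul_zero]
  by_cases hv0 : σ - b • ρ = 0
  · have hσb : σ = b • ρ := sub_eq_zero.mp hv0
    have hb0 : 0 < b := hb.lt_of_ne fun h => hσ0 (by rw [hσb, ← h, zero_smul])
    rw [dfun_comm, dfun_comm (X := ρ), hσb, LinearMap.map_smul_of_tower,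
      dfun_smul_self (hpos ρ hρ) hφρ0 hb0, dfun_smul_self hρ hρ0 hb0, mul_zero]
  set u := ρ - a • σ
  set v := σ - b • ρ
  have hρuv : (1 - a * b) • ρ = u + a • v := by module
  have hσuv : (1 - a * b) • σ = b • u + v := by module
  have hab : 0 < 1 - a * b := sub_pos.mpr (mfun_mul_mfun_lt_one hρ hρ0 hσ hσ0 hu0)
  have hφu0 : φ u ≠ 0 := fun h => hu0 (hker u hu h)
  have hφv0 : φ v ≠ 0 := fun h => hv0 (hker v hv h)
  have hcomb := le_mfun_add_smul_mul_mfun (hpos u hu) hφu0 (hpos v hv) hφv0 ha hb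
    (mfun_mul_mfun_le_one hρ hρ0 hσ hσ0)
  calc dfun (φ ρ) (φ σ) = dfun (φ u + a • φ v) (b • φ u + φ v) := by
        rw [← dfun_smul_smul hab hab, ← LinearMap.map_smul_of_tower,
          ← LinearMap.map_smul_of_tower, hρuv, hσuv]
        simp only [map_add, LinearMap.map_smul_of_tower]
    _ ≤ dfun ρ σ * dfun (φ u) (φ v) :=
        one_sub_div_one_add_le_mul (mul_nonneg ha hb)
          (mul_nonneg (mfun_nonneg_s16 (hpos u hu) (hpos v hv) hφv0)
            (mfun_nonneg_s16 (hpos v hv) (hpos u hu) hφu0)) hcomb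
    _ ≤ contr φ * dfun ρ σ := by
        rw [mul_comm]
        exact mul_le_mul_of_nonneg_right (dfun_apply_le_contr φ hpos hker hu hu0 hv hv0)
          (dfun_nonneg hρ hρ0 hσ hσ0)

end Contraction

theorem stmt16_general {D : ℕ}
    (φ φ' : Matrix (Fin D) (Fin D) ℂ →ₗ[ℂ] Matrix (Fin D) (Fin D) ℂ)
    (hpos : ∀ M : Matrix (Fin D) (Fin D) ℂ, M.PosSemidef → (φ M).PosSemidef)
    (hpos' : ∀ M : Matrix (Fin D) (Fin D) ℂ, M.PosSemidef → (φ' M).PosSemidef)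
    (hker : ∀ M : Matrix (Fin D) (Fin D) ℂ, M.PosSemidef → φ M = 0 → M = 0)
    (hker' : ∀ M : Matrix (Fin D) (Fin D) ℂ, M.PosSemidef → φ' M = 0 → M = 0) :
    contr (φ.comp φ') ≤ contr φ * contr φ' := by
  refine Real.sSup_le ?_ (mul_nonneg (contr_nonneg φ hpos hker) (contr_nonneg φ' hpos' hker'))
  rintro _ ⟨X, Y, hX, hXt, hY, hYt, rfl⟩
  have hX0 : X ≠ 0 := by rintro rfl; simp at hXt
  have hY0 : Y ≠ 0 := by rintro rfl; simp at hYt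
  have hφ'X0 : φ' X ≠ 0 := fun h => hX0 (hker' X hX h)
  have hφ'Y0 : φ' Y ≠ 0 := fun h => hY0 (hker' Y hY h)
  have hφφ'X0 : φ (φ' X) ≠ 0 := fun h => hφ'X0 (hker _ (hpos' X hX) h)
  have hφφ'Y0 : φ (φ' Y) ≠ 0 := fun h => hφ'Y0 (hker _ (hpos' Y hY) h)
  calc dfun (projAct (φ.comp φ') X) (projAct (φ.comp φ') Y) = dfun (φ (φ' X)) (φ (φ' Y)) :=
        dfun_projAct _ (hpos _ (hpos' X hX)) hφφ'X0 (hpos _ (hpos' Y hY)) hφφ'Y0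
    _ ≤ contr φ * dfun (φ' X) (φ' Y) :=
        dfun_apply_le_contr_mul φ hpos hker (hpos' X hX) hφ'X0 (hpos' Y hY) hφ'Y0
    _ ≤ contr φ * contr φ' :=
        mul_le_mul_of_nonneg_left (dfun_apply_le_contr φ' hpos' hker' hX hX0 hY hY0)
          (contr_nonneg φ hpos hker)

theorem stmt16 {D : ℕ}
    (φ φs φ' φ's : Matrix (Fin D) (Fin D) ℂ →ₗ[ℂ] Matrix (Fin D) (Fin D) ℂ)
    (hadj : ∀ A B : Matrix (Fin D) (Fin D) ℂ, (Aᴴ * φ B).trace = ((φs A)ᴴ * B).trace)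
    (hadj' : ∀ A B : Matrix (Fin D) (Fin D) ℂ, (Aᴴ * φ' B).trace = ((φ's A)ᴴ * B).trace)
    (hpos : ∀ M : Matrix (Fin D) (Fin D) ℂ, M.PosSemidef → (φ M).PosSemidef)
    (hpos' : ∀ M : Matrix (Fin D) (Fin D) ℂ, M.PosSemidef → (φ' M).PosSemidef)
    (hker : ∀ M : Matrix (Fin D) (Fin D) ℂ, M.PosSemidef → φ M = 0 → M = 0)
    (hkers : ∀ M : Matrix (Fin D) (Fin D) ℂ, M.PosSemidef → φs M = 0 → M = 0)
    (hker' : ∀ M : Matrix (Fin D) (Fin D) ℂ, M.PosSemidef → φ' M = 0 → M = 0)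
    (hker's : ∀ M : Matrix (Fin D) (Fin D) ℂ, M.PosSemidef → φ's M = 0 → M = 0) :
    contr (φ.comp φ') ≤ contr φ * contr φ' :=
  stmt16_general φ φ' hpos hpos' hker hker'
end
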